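/- arXiv:1411.6856 — 6 statements merged into one kernel-verified Lean document; each statement's English description precedes it below -/
import Mathlib

section
/- Every integer-valued polynomial P(x) ∈ ℚ[x] containing only even powers of x (i.e. P(−x) = P(x) and P(ℤ) ⊆ ℤ) can be written as a ℤ-linear combination P(x) = Σ_{n=0}^{N} a_n E_n(x) with a_n ∈ ℤ, where 2N is the degree of P. -/
/-- The polynomials `E_0 = 1` and `E_n(X) = (2/(2n)!) · ∏_{ℓ=0}^{n-1} (X² − ℓ²)` for `n ≥ 1`. -/
noncomputable def EpolyZ (n : ℕ) : Polynomial ℚ :=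
  if n = 0 then 1 else
    Polynomial.C (2 / (Nat.factorial (2 * n) : ℚ)) *
      ∏ ℓ ∈ Finset.range n, (Polynomial.X ^ 2 - Polynomial.C ((ℓ : ℚ) ^ 2))

open Polynomial Finset

lemma E_natDegree_le (n : ℕ) : (EpolyZ n).natDegree ≤ 2 * n := by
  unfold EpolyZ
  split
  · simp
  · refine le_trans (natDegree_mul_le) ?_
    simp only [natDegree_C, zero_add]
    refine le_trans (natDegree_prod_le _ _) ?_
    calc ∑ ℓ ∈ Finset.range n, (Polynomial.X ^ 2 - Polynomial.C ((ℓ:ℚ)^2)).natDegree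
        ≤ ∑ ℓ ∈ Finset.range n, 2 := by
          refine Finset.sum_le_sum fun i _ => ?_
          exact le_of_eq (natDegree_X_pow_sub_C)
      _ = 2 * n := by simp [mul_comm]

lemma E_even (n : ℕ) (x : ℚ) : (EpolyZ n).eval (-x) = (EpolyZ n).eval x := by
  unfold EpolyZ
  split
  · simp
  · simp [eval_prod, neg_pow]

lemma E_eval_zero {k n : ℕ} (h : k < n) : (EpolyZ n).eval (k : ℚ) = 0 := by
  unfold EpolyZ
  have hn : n ≠ 0 := by omega
  rw [if_neg hn]
  rw [eval_mul, eval_prod]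
  rw [Finset.prod_eq_zero (Finset.mem_range.mpr h)]
  · ring
  · simp

-- key nat identity
lemma natKey (m n : ℕ) (hm : 1 ≤ m) (hmn : m ≤ n) :
    2 * (n.descFactorial m * n.ascFactorial m) =
      (n + m).descFactorial (2 * m) + (n + m - 1).descFactorial (2 * m) := by
  have hn : 0 < n := lt_of_lt_of_le hm hmn
  apply Nat.eq_of_mul_eq_mul_left hn
  have h1 : (n + m).descFactorial (2 * m) = n.descFactorial m * (n + m).descFactorial m := by
    have := Nat.descFactorial_mul_descFactorial (k := m) (m := 2 * m) (n := n + m) (by omega)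
    rw [show n + m - m = n by omega, show 2 * m - m = m by omega] at this
    exact this.symm
  have h2 : (n + m).descFactorial m = (n + 1).ascFactorial m :=
    Nat.add_descFactorial_eq_ascFactorial n m
  have h3 : (n + m - 1).descFactorial (2 * m) =
      (n - 1).descFactorial m * (n + m - 1).descFactorial m := by
    have := Nat.descFactorial_mul_descFactorial (k := m) (m := 2 * m) (n := n + m - 1) (by omega)
    rw [show n + m - 1 - m = n - 1 by omega, show 2 * m - m = m by omega] at this
    exact this.symm
  have h4 : (n + m - 1).descFactorial m = n.ascFactorial m :=
    Nat.add_descFactorial_eq_ascFactorial' n m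
  have h5 : n * (n + 1).ascFactorial m = (n + m) * n.ascFactorial m :=
    Nat.succ_ascFactorial n m
  have h6 : n * (n - 1).descFactorial m = n.descFactorial (m + 1) := by
    obtain ⟨n', rfl⟩ : ∃ n', n = n' + 1 := ⟨n - 1, by omega⟩
    rw [Nat.succ_descFactorial_succ]
    simp
  have h7 : n.descFactorial (m + 1) = (n - m) * n.descFactorial m := Nat.descFactorial_succ n m
  rw [h1, h2, h3, h4]
  rw [Nat.mul_add,
    show n * (n.descFactorial m * (n + 1).ascFactorial m)
      = n.descFactorial m * (n * (n + 1).ascFactorial m) by ring, h5,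
    show n * ((n - 1).descFactorial m * n.ascFactorial m)
      = (n * (n - 1).descFactorial m) * n.ascFactorial m by ring, h6, h7]
  obtain ⟨k, rfl⟩ : ∃ k, n = m + k := ⟨n - m, by omega⟩
  rw [Nat.add_sub_cancel_left]
  ring

lemma ascFactorial_prod (n : ℕ) : ∀ k, (∏ i ∈ Finset.range k, (n + i)) = n.ascFactorial k
  | 0 => by simp
  | k + 1 => by
      rw [Finset.prod_range_succ, ascFactorial_prod n k, Nat.ascFactorial_succ, Nat.mul_comm]

lemma E_eval_nat {m n : ℕ} (hm : 1 ≤ m) (hmn : m ≤ n) :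
    (EpolyZ m).eval (n : ℚ) =
      (((n + m).choose (2 * m) + (n + m - 1).choose (2 * m) : ℕ) : ℚ) := by
  unfold EpolyZ
  rw [if_neg (by omega), eval_mul, eval_C, eval_prod]
  have hD : (∏ ℓ ∈ range m, ((n : ℚ) - ℓ)) = (n.descFactorial m : ℚ) := by
    rw [Nat.descFactorial_eq_prod_range, Nat.cast_prod]
    refine Finset.prod_congr rfl fun i hi => ?_
    have hin : i ≤ n := le_trans (le_of_lt (Finset.mem_range.mp hi)) hmn
    rw [Nat.cast_sub hin]
  have hA : (∏ ℓ ∈ range m, ((n : ℚ) + ℓ)) = (n.ascFactorial m : ℚ) := by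
    rw [← ascFactorial_prod, Nat.cast_prod]
    exact Finset.prod_congr rfl fun i _ => by push_cast; ring
  have hprod : (∏ ℓ ∈ range m, (((X : ℚ[X]) ^ 2 - C ((ℓ : ℚ) ^ 2)).eval (n : ℚ)))
      = (n.descFactorial m : ℚ) * (n.ascFactorial m : ℚ) := by
    rw [← hD, ← hA, ← Finset.prod_mul_distrib]
    exact Finset.prod_congr rfl fun i _ => by simp; ring
  rw [hprod]
  have hkey := natKey m n hm hmn
  have hkeyQ : (2 : ℚ) * ((n.descFactorial m : ℚ) * (n.ascFactorial m : ℚ))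
      = ((2 * m).factorial : ℚ) *
        (((n + m).choose (2 * m) + (n + m - 1).choose (2 * m) : ℕ) : ℚ) := by
    have := congrArg (fun t : ℕ => (t : ℚ)) hkey
    push_cast at this ⊢
    rw [this, Nat.descFactorial_eq_factorial_mul_choose, Nat.descFactorial_eq_factorial_mul_choose]
    push_cast
    ring
  have hfac : ((2 * m).factorial : ℚ) ≠ 0 := Nat.cast_ne_zero.mpr (Nat.factorial_ne_zero _)
  field_simp
  push_cast at hkeyQ ⊢
  linarith [hkeyQ]

lemma E_eval_self (n : ℕ) : (EpolyZ n).eval (n : ℚ) = 1 := by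
  rcases Nat.eq_zero_or_pos n with h | h
  · subst h; simp [EpolyZ]
  · rw [E_eval_nat h le_rfl]
    rw [show n + n = 2 * n by ring, Nat.choose_self,
      Nat.choose_eq_zero_of_lt (by omega)]
    simp

noncomputable def cfun (P : Polynomial ℚ) : ℕ → ℚ
  | n => P.eval (n : ℚ) - ∑ m ∈ (Finset.range n).attach,
      cfun P m.1 * (EpolyZ m.1).eval (n : ℚ)
decreasing_by exact Finset.mem_range.mp m.2

lemma cfun_eq (P : Polynomial ℚ) (n : ℕ) :
    cfun P n = P.eval (n : ℚ) - ∑ m ∈ Finset.range n, cfun P m * (EpolyZ m).eval (n : ℚ) := by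
  rw [cfun]
  congr 1
  exact Finset.sum_attach (Finset.range n) (fun m => cfun P m * (EpolyZ m).eval (n : ℚ))

lemma sum_eval (P : Polynomial ℚ) (N k : ℕ) (hk : k ≤ N) :
    ∑ n ∈ Finset.range (N + 1), cfun P n * (EpolyZ n).eval (k : ℚ) = P.eval (k : ℚ) := by
  have hsub : Finset.range (k + 1) ⊆ Finset.range (N + 1) :=
    Finset.range_subset_range.mpr (by omega)
  have hzero : ∀ n ∈ Finset.range (N + 1), n ∉ Finset.range (k + 1) →
      cfun P n * (EpolyZ n).eval (k : ℚ) = 0 := by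
    intro n _ hn
    have hkn : k < n := by
      simp only [Finset.mem_range] at hn
      omega
    rw [E_eval_zero hkn]
    ring
  rw [← Finset.sum_subset hsub hzero]
  rw [Finset.sum_range_succ, E_eval_self, cfun_eq]
  ring

noncomputable def zE (m n : ℕ) : ℤ :=
  if m = 0 then 1 else ((n + m).choose (2 * m) + (n + m - 1).choose (2 * m) : ℕ)

lemma zE_spec {m n : ℕ} (h : m ≤ n) : (EpolyZ m).eval (n : ℚ) = (zE m n : ℚ) := by
  rcases Nat.eq_zero_or_pos m with h0 | h0
  · subst h0; simp [EpolyZ, zE]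
  · rw [E_eval_nat h0 h, zE, if_neg (by omega)]
    push_cast
    ring

lemma cfun_int (P : Polynomial ℚ) (hP : ∀ x : ℤ, ∃ z : ℤ, P.eval (x : ℚ) = z) :
    ∀ n : ℕ, ∃ z : ℤ, cfun P n = (z : ℚ) := by
  intro n
  induction n using Nat.strong_induction_on with
  | _ n ih =>
    choose f hf using ih
    obtain ⟨w, hw⟩ := hP (n : ℤ)
    push_cast at hw
    refine ⟨w - ∑ m ∈ (Finset.range n).attach,
      f m.1 (Finset.mem_range.mp m.2) * zE m.1 n, ?_⟩
    rw [cfun_eq, hw]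
    push_cast
    congr 1
    rw [← Finset.sum_attach (Finset.range n)
      (fun m => cfun P m * (EpolyZ m).eval (n : ℚ))]
    refine Finset.sum_congr rfl fun m _ => ?_
    have hmn : m.1 < n := Finset.mem_range.mp m.2
    rw [hf m.1 hmn, zE_spec (le_of_lt hmn)]

/-- Every integer-valued even polynomial of degree `2N` is a `ℤ`-linear combination
of `E_0, …, E_N`. -/
theorem stmt3 : ∀ P : Polynomial ℚ,
    (∀ x : ℤ, ∃ z : ℤ, P.eval (x : ℚ) = z) →
    (∀ x : ℚ, P.eval (-x) = P.eval x) →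
    ∀ N : ℕ, P.natDegree = 2 * N →
    ∃ a : ℕ → ℤ, P = ∑ n ∈ Finset.range (N + 1), Polynomial.C ((a n : ℚ)) * EpolyZ n := by
  intro P hP hE N hdeg
  set S : Polynomial ℚ := ∑ n ∈ Finset.range (N + 1), C (cfun P n) * EpolyZ n with hS
  have hSeven : ∀ x : ℚ, S.eval (-x) = S.eval x := by
    intro x
    rw [hS, eval_finset_sum, eval_finset_sum]
    exact Finset.sum_congr rfl fun n _ => by simp [E_even]
  have hkeyN : ∀ k : ℕ, k ≤ N → (P - S).eval (k : ℚ) = 0 := by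
    intro k hk
    rw [eval_sub, hS, eval_finset_sum]
    simp only [eval_mul, eval_C]
    rw [sum_eval P N k hk]
    ring
  have hSdeg : S.natDegree ≤ 2 * N := by
    refine Polynomial.natDegree_sum_le_of_forall_le _ _ fun n hn => ?_
    refine le_trans (natDegree_mul_le) ?_
    rw [natDegree_C, zero_add]
    exact le_trans (E_natDegree_le n) (by
      have := Finset.mem_range.mp hn
      omega)
  have hQzero : P - S = 0 := by
    apply Polynomial.eq_zero_of_natDegree_lt_card_of_eval_eq_zero' _
      ((Finset.Icc (-(N : ℤ)) (N : ℤ)).image (fun z : ℤ => (z : ℚ)))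
    · intro x hx
      simp only [Finset.mem_image, Finset.mem_Icc] at hx
      obtain ⟨z, ⟨hz1, hz2⟩, rfl⟩ := hx
      rcases le_or_gt 0 z with h0 | h0
      · obtain ⟨k, rfl⟩ := Int.eq_ofNat_of_zero_le h0
        have hk : k ≤ N := by exact_mod_cast hz2
        have := hkeyN k hk
        push_cast
        exact this
      · obtain ⟨k, rfl⟩ : ∃ k : ℕ, z = -(k : ℤ) := ⟨z.natAbs, by omega⟩
        have hk : k ≤ N := by omega
        have h1 : (P - S).eval (-(k : ℚ)) = (P - S).eval (k : ℚ) := by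
          rw [eval_sub, eval_sub, hE, hSeven]
        have := hkeyN k hk
        push_cast
        rw [h1]
        exact this
    · have hcard : ((Finset.Icc (-(N : ℤ)) (N : ℤ)).image (fun z : ℤ => (z : ℚ))).card
          = 2 * N + 1 := by
        rw [Finset.card_image_of_injective _ (fun a b h => by exact_mod_cast h)]
        rw [Int.card_Icc]
        omega
      rw [hcard]
      have : (P - S).natDegree ≤ 2 * N :=
        le_trans (natDegree_sub_le _ _) (by rw [hdeg]; omega)
      omega
  have hPS : P = S := sub_eq_zero.mp hQzero
  choose a ha using cfun_int P hP
  refine ⟨a, ?_⟩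
  rw [hPS, hS]
  exact Finset.sum_congr rfl fun n _ => by rw [ha n]
end

section
/- For all natural numbers n, N with n < 2^N and every integer x, the binomial coefficient polynomial satisfies C(x + 2^{N+1}, n) ≡ C(x, n) (mod 4), where C(x,n) = (1/n!)·∏_{ℓ=0}^{n-1}(x − ℓ). -/
/-!
By Vandermonde's identity, `C(x + 2^(N+1), n) - C(x, n) = ∑_{0 < j ≤ n} C(x, n - j) C(2^(N+1), j)`,
and for `0 < j < 2^N` Kummer's theorem gives `v₂ C(2^(N+1), j) = N + 1 - v₂ j ≥ 2`.
-/

/-- The binomial coefficient polynomial `C(x,n) = (1/n!)·∏_{ℓ=0}^{n-1}(x−ℓ)`. -/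
noncomputable def qbinom (x : ℚ) (n : ℕ) : ℚ :=
  (∏ ℓ ∈ Finset.range n, (x - (ℓ : ℚ))) / (Nat.factorial n : ℚ)

open Polynomial in
theorem qbinom_eq_choose (y : ℚ) (n : ℕ) : qbinom y n = Ring.choose y n := by
  rw [qbinom, Ring.choose_eq_smul, ← aeval_eq_smeval, aeval_def, eval₂_eq_eval_map,
    descPochhammer_map, descPochhammer_eval_eq_prod_range, smul_eq_mul, div_eq_inv_mul]

theorem qbinom_intCast (x : ℤ) (n : ℕ) : qbinom x n = (Ring.choose x n : ℤ) := by
  rw [qbinom_eq_choose]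
  exact (Ring.map_choose (Int.castRingHom ℚ) x n).symm

theorem Nat.Prime.pow_dvd_choose_prime_pow {p n j k : ℕ} (hp : p.Prime) (hk0 : k ≠ 0)
    (hk : k < p ^ j) (hjn : j ≤ n) : p ^ (n - j + 1) ∣ (p ^ n).choose k := by
  have hkn : k ≤ p ^ n := hk.le.trans (Nat.pow_le_pow_right hp.pos hjn)
  have hvk : k.factorization p < j :=
    (Nat.pow_lt_pow_iff_right hp.one_lt).mp ((Nat.ordProj_le p hk0).trans_lt hk)
  rw [hp.pow_dvd_iff_le_factorization (Nat.choose_pos hkn).ne',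
    Nat.factorization_choose_prime_pow hp hkn hk0]
  omega

open Finset in
theorem Ring.dvd_choose_add_natCast_sub_choose {R : Type*} [CommRing R] [BinomialRing R]
    {d : R} {m n : ℕ} (hd : ∀ k, k ≠ 0 → k ≤ n → d ∣ (m.choose k : R)) (r : R) :
    d ∣ Ring.choose (r + m) n - Ring.choose r n := by
  rw [Ring.add_choose_eq n (Commute.all _ _),
    ← add_sum_erase _ _ (by simp : (n, 0) ∈ antidiagonal n)]
  simp only [Ring.choose_zero_right, mul_one, add_sub_cancel_left]
  refine dvd_sum fun ij hij => ?_
  obtain ⟨hne, hsum⟩ := mem_erase.mp hij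
  rw [HasAntidiagonal.mem_antidiagonal] at hsum
  have hj : ij.2 ≠ 0 := fun h => hne (Prod.ext (by omega) h)
  rw [Ring.choose_natCast]
  exact dvd_mul_of_dvd_right (hd _ hj (by omega)) _

/-- For `n < 2^N` and every integer `x`, `C(x + 2^{N+1}, n) ≡ C(x, n) (mod 4)`. -/
theorem stmt6 : ∀ n N : ℕ, n < 2 ^ N → ∀ x : ℤ,
    ∃ z : ℤ, qbinom ((x : ℚ) + 2 ^ (N + 1)) n - qbinom (x : ℚ) n = 4 * z := by
  intro n N hn x
  have hdvd : (4 : ℤ) ∣ Ring.choose (x + (2 ^ (N + 1) : ℕ)) n - Ring.choose x n := by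
    refine Ring.dvd_choose_add_natCast_sub_choose (fun k hk0 hkn => ?_) x
    have := Nat.prime_two.pow_dvd_choose_prime_pow (n := N + 1) hk0 (hkn.trans_lt hn)
      (Nat.le_add_right N 1)
    rw [Nat.add_sub_cancel_left] at this
    exact_mod_cast this
  obtain ⟨z, hz⟩ := hdvd
  refine ⟨z, ?_⟩
  rw [show (x : ℚ) + 2 ^ (N + 1) = ((x + (2 ^ (N + 1) : ℕ) : ℤ) : ℚ) by push_cast; rfl,
    qbinom_intCast, qbinom_intCast, ← Int.cast_sub, hz]
  push_cast; rfl
end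

section
/- For all natural numbers n, N with 1 ≤ n ≤ 2^N and every nonnegative integer x, one has E_n(x + 2^{N+2}) ≡ E_n(x) (mod 4), and moreover 2·E_n(x + 2^{N+1}) ≡ 2·E_n(x) (mod 4). -/
noncomputable def Efun (n : ℕ) (x : ℚ) : ℚ :=
  (2 / (Nat.factorial (2 * n) : ℚ)) * ∏ ℓ ∈ Finset.range n, (x ^ 2 - (ℓ : ℚ) ^ 2)

/-!
The falling products `(x+n)⋯(x-n+1)` and `(x+n-1)⋯(x-n)` are `(x+n)·R` and `(x-n)·R` with
`R = x·∏_{0<ℓ<n} (x²-ℓ²)`, so they add up to `2∏_{ℓ<n} (x²-ℓ²)`, i.e.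
`E_n(x) = C(x+n, 2n) + C(x+n-1, 2n)`. Shifting `x` by `q = 2^a` and expanding both binomials by
Vandermonde, every cross term carries a factor `C(q, j)` with `0 < j < 2n ≤ 2^(N+1)`; by Kummer
these are divisible by `4` when `q = 2^(N+2)` and by `2` when `q = 2^(N+1)`. What survives is
`2·C(q, 2n)`, once from each binomial, and `C(2^(N+2), 2n)` is even.
-/

open Finset

section CenteredProducts

variable {R : Type*} [CommRing R]

theorem prod_range_add_one_sub (y : R) (k : ℕ) :
    ∏ i ∈ range (k + 2), (y + 1 - i) = (y + 1) * (∏ i ∈ range k, (y - i)) * (y - k) := by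
  rw [prod_range_succ, prod_range_succ']
  push_cast
  ring_nf

theorem prod_range_centered_eq (x : R) (n : ℕ) :
    ∏ i ∈ range (2 * n + 2), (x + n + 1 - i) =
        (x + n + 1) * x * ∏ ℓ ∈ range n, (x ^ 2 - (ℓ + 1) ^ 2) ∧
      ∏ i ∈ range (2 * n + 2), (x + n - i) =
        x * (x - n - 1) * ∏ ℓ ∈ range n, (x ^ 2 - (ℓ + 1) ^ 2) := by
  induction n with
  | zero => simp [prod_range_succ]
  | succ n ih =>
    rw [show 2 * (n + 1) + 2 = 2 * n + 2 + 2 by ring, prod_range_succ _ n]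
    push_cast
    constructor
    · rw [prod_range_add_one_sub, ← add_assoc, ih.1]; push_cast; ring
    · rw [← add_assoc, prod_range_add_one_sub, ih.2]; push_cast; ring

theorem prod_range_centered_add (x : R) (n : ℕ) :
    ∏ i ∈ range (2 * n), (x + n - i) + ∏ i ∈ range (2 * n), (x + n - 1 - i) =
      2 * ∏ ℓ ∈ range n, (x ^ 2 - ℓ ^ 2) := by
  cases n with
  | zero => norm_num
  | succ n =>
    obtain ⟨ha, hb⟩ := prod_range_centered_eq x n
    push_cast
    rw [mul_add_one, ← add_assoc, ha, add_sub_cancel_right, hb, prod_range_succ']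
    push_cast
    ring

end CenteredProducts

theorem Nat.choose_mul_factorial_eq_prod_range (R : Type*) [CommRing R] (m k : ℕ) :
    (m.choose k * k.factorial : R) = ∏ i ∈ range k, ((m : R) - i) := by
  rw [← Nat.cast_mul, mul_comm, ← Nat.descFactorial_eq_factorial_mul_choose,
    ← descPochhammer_eval_eq_descFactorial, descPochhammer_eval_eq_prod_range]

theorem Efun_natCast {n : ℕ} (hn : 1 ≤ n) (x : ℕ) :
    Efun n x = ((x + n).choose (2 * n) + (x + n - 1).choose (2 * n) : ℕ) := by
  have hfac : ((2 * n).factorial : ℚ) ≠ 0 := by positivity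
  rw [Efun, div_mul_eq_mul_div, ← prod_range_centered_add, div_eq_iff hfac, Nat.cast_add, add_mul,
    Nat.choose_mul_factorial_eq_prod_range, Nat.choose_mul_factorial_eq_prod_range]
  push_cast [Nat.cast_sub (show 1 ≤ x + n by omega)]
  rfl

theorem Nat.choose_add_modEq {d p k : ℕ} (y : ℕ) (hk : k ≠ 0)
    (hd : ∀ j, 0 < j → j < k → d ∣ p.choose j) :
    (y + p).choose k ≡ y.choose k + p.choose k [MOD d] := by
  obtain ⟨m, rfl⟩ := Nat.exists_eq_succ_of_ne_zero hk
  have hmid : d ∣ ∑ i ∈ range m, y.choose (i + 1) * p.choose (m + 1 - (i + 1)) :=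
    dvd_sum fun i hi => dvd_mul_of_dvd_right (hd _ (by grind) (by grind)) _
  rw [add_choose_eq, Nat.sum_antidiagonal_eq_sum_range_succ_mk, sum_range_succ, sum_range_succ']
  simp only [choose_zero_right, one_mul, Nat.sub_zero, Nat.sub_self, mul_one]
  calc _ = (∑ i ∈ range m, y.choose (i + 1) * p.choose (m + 1 - (i + 1))) +
        (y.choose (m + 1) + p.choose (m + 1)) := by ring
    _ ≡ 0 + (y.choose (m + 1) + p.choose (m + 1)) [MOD d] :=
      (Nat.modEq_zero_iff_dvd.mpr hmid).add_right _
    _ = _ := zero_add _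

theorem Nat.Prime.sq_dvd_choose_pow {p a j : ℕ} (hp : p.Prime) (hj0 : j ≠ 0)
    (hj : j < p ^ (a + 1)) : p ^ 2 ∣ (p ^ (a + 2)).choose j := by
  have hja : j ≤ p ^ (a + 2) := hj.le.trans (Nat.pow_le_pow_right hp.pos (by omega))
  have hval : j.factorization p ≤ a := by
    by_contra! h
    exact hj.not_ge (Nat.le_of_dvd (Nat.pos_of_ne_zero hj0)
      ((hp.pow_dvd_iff_le_factorization hj0).mpr h))
  rw [hp.pow_dvd_iff_le_factorization (Nat.choose_pos hja).ne',
    Nat.factorization_choose_prime_pow hp hja hj0]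
  omega

theorem Efun_add_sub_eq {n q d : ℕ} (hn : 1 ≤ n) (x : ℕ)
    (hq : ∀ j, 0 < j → j < 2 * n → d ∣ q.choose j) :
    ∃ z : ℤ, Efun n (x + q) - Efun n x = 2 * q.choose (2 * n) + d * z := by
  have h₁ := Nat.choose_add_modEq (x + n) (by omega) hq
  have h₂ := Nat.choose_add_modEq (x + n - 1) (by omega) hq
  obtain ⟨z, hz⟩ := (h₁.add h₂).symm.dvd
  refine ⟨z, ?_⟩
  have hz' := congrArg (Int.cast : ℤ → ℚ) hz
  rw [← Nat.cast_add, Efun_natCast hn, Efun_natCast hn, show x + q + n = x + n + q by omega,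
    show x + n + q - 1 = x + n - 1 + q by omega]
  push_cast at hz' ⊢
  linarith

/-- For `1 ≤ n ≤ 2^N` and `x ∈ ℤ_{≥0}`: `E_n(x + 2^{N+2}) ≡ E_n(x) (mod 4)` and
`2·E_n(x + 2^{N+1}) ≡ 2·E_n(x) (mod 4)`. -/
theorem stmt7 : ∀ n N : ℕ, 1 ≤ n → n ≤ 2 ^ N → ∀ x : ℕ,
    (∃ z : ℤ, Efun n ((x : ℚ) + 2 ^ (N + 2)) - Efun n (x : ℚ) = 4 * z) ∧
    (∃ z : ℤ, 2 * Efun n ((x : ℚ) + 2 ^ (N + 1)) - 2 * Efun n (x : ℚ) = 4 * z) := by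
  intro n N hn hnN x
  have h2n : 2 * n ≤ 2 ^ (N + 1) := by rw [pow_succ]; omega
  constructor
  · obtain ⟨z, hz⟩ := Efun_add_sub_eq (q := 2 ^ (N + 2)) (d := 2 ^ 2) hn x
      fun j hj0 hj => Nat.prime_two.sq_dvd_choose_pow hj0.ne' (by omega)
    obtain ⟨c, hc⟩ := Nat.prime_two.dvd_choose_pow (n := N + 2) (k := 2 * n) (by omega)
      (by rw [pow_succ]; omega)
    refine ⟨c + z, ?_⟩
    push_cast [hc] at hz
    rw [hz]
    push_cast
    ring
  · obtain ⟨z, hz⟩ := Efun_add_sub_eq (q := 2 ^ (N + 1)) (d := 2) hn x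
      fun j hj0 hj => Nat.prime_two.dvd_choose_pow hj0.ne' (by omega)
    refine ⟨(2 ^ (N + 1)).choose (2 * n) + z, ?_⟩
    push_cast at hz
    rw [← mul_sub, hz]
    push_cast
    ring
end

section
/- For every odd positive integer n and every even integer k, one has E_n(k) ≡ 0 (mod 4). -/
/-!
Since `x² - ℓ² = (x - ℓ)(x + ℓ)`, the product defining `E_{n+1}(m)` telescopes into a falling
factorial, and for a natural number `m` this gives `(n + 1) E_{n+1}(m) = m · C(m + n, 2n + 1)`;
the absorption identity `(a + 1) C(a, b) = (b + 1) C(a + 1, b + 1)` then shows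
`E_{n+1}(m) = 2 C(m + n + 1, 2n + 2) - C(m + n, 2n + 1)`, an integer.
When `n + 1` is odd and `m` is even, both `m` and `C(m + n, 2n + 1)` are even, so `4` divides
`(n + 1) E_{n+1}(m)` and hence `E_{n+1}(m)`. Negative `k` reduce to `|k|` because `E_n` is even.
-/

open Finset Polynomial

theorem prod_range_succ_sq_sub_sq {R : Type*} [CommRing R] (x : R) (n : ℕ) :
    ∏ ℓ ∈ range (n + 1), (x ^ 2 - (ℓ : R) ^ 2) =
      x * (descPochhammer R (2 * n + 1)).eval (x + n) := by
  induction n with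
  | zero => simp [descPochhammer_one, sq]
  | succ n ih =>
    have hstep : (descPochhammer R (2 * n + 3)).eval (x + (n + 1 : ℕ)) =
        (x + n + 1) * (descPochhammer R (2 * n + 1)).eval (x + n) * (x - n - 1) := by
      rw [descPochhammer_succ_left, eval_mul, eval_comp, descPochhammer_succ_eval]
      simp only [eval_X, eval_sub, eval_one]
      push_cast
      ring_nf
    rw [prod_range_succ, ih, show 2 * (n + 1) + 1 = 2 * n + 3 by ring, hstep]
    push_cast
    ring

theorem Nat.two_dvd_choose_of_even_of_odd {a b : ℕ} (ha : Even a) (hb : Odd b) :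
    2 ∣ a.choose b := by
  have hprod : 2 ∣ (a + 1) * a.choose b := by
    rw [add_one_mul_choose_eq]
    exact Dvd.dvd.mul_left (even_iff_two_dvd.mp hb.add_one) _
  exact (Nat.coprime_two_left.mpr ha.add_one).dvd_of_dvd_mul_left hprod

theorem Efun_abs (n : ℕ) (x : ℚ) : Efun n |x| = Efun n x := by
  simp only [Efun, sq_abs]

theorem succ_mul_Efun_natCast (m n : ℕ) :
    ((n : ℚ) + 1) * Efun (n + 1) m = m * (m + n).choose (2 * n + 1) := by
  rw [Efun, prod_range_succ_sq_sub_sq, ← Nat.cast_add, descPochhammer_eval_eq_descFactorial,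
    Nat.descFactorial_eq_factorial_mul_choose, show 2 * (n + 1) = 2 * n + 1 + 1 by ring,
    Nat.factorial_succ]
  push_cast
  field_simp
  ring

theorem exists_int_Efun_natCast (m n : ℕ) :
    ∃ e : ℤ, Efun (n + 1) m = e ∧ ((n : ℤ) + 1) * e = m * (m + n).choose (2 * n + 1) := by
  have pascal : ((m : ℤ) + n + 1) * (m + n).choose (2 * n + 1) =
      (m + n + 1).choose (2 * n + 2) * (2 * n + 2) := by
    exact_mod_cast Nat.add_one_mul_choose_eq (m + n) (2 * n + 1)
  set e : ℤ := 2 * (m + n + 1).choose (2 * n + 2) - (m + n).choose (2 * n + 1)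
  have hmul : ((n : ℤ) + 1) * e = m * (m + n).choose (2 * n + 1) := by
    linear_combination -pascal
  refine ⟨e, mul_left_cancel₀ (by positivity : (n : ℚ) + 1 ≠ 0) ?_, hmul⟩
  rw [succ_mul_Efun_natCast]
  exact_mod_cast hmul.symm

/-- For every odd positive integer `n` and every even integer `k`, `E_n(k) ≡ 0 (mod 4)`. -/
theorem stmt9 : ∀ n : ℕ, Odd n → 1 ≤ n → ∀ k : ℤ, Even k →
    ∃ z : ℤ, Efun n (k : ℚ) = 4 * z := by
  rintro n ⟨j, rfl⟩ - k hk
  set m := k.natAbs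
  have hm : Even m := Int.natAbs_even.mpr hk
  have habs : (m : ℚ) = |(k : ℚ)| := by rw [Nat.cast_natAbs, Int.cast_abs]
  obtain ⟨e, he, hmul⟩ := exists_int_Efun_natCast m (2 * j)
  have hB : 2 ∣ (m + 2 * j).choose (2 * (2 * j) + 1) :=
    Nat.two_dvd_choose_of_even_of_odd (hm.add (even_two_mul j)) (odd_two_mul_add_one _)
  have h4 : (4 : ℤ) ∣ ((2 * j : ℕ) + 1 : ℤ) * e := by
    rw [hmul]
    exact mul_dvd_mul (Int.natCast_dvd_natCast.mpr (even_iff_two_dvd.mp hm))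
      (Int.natCast_dvd_natCast.mpr hB)
  -- `(2j + 1)² = 4 (j² + j) + 1`
  have hcop : IsCoprime (4 : ℤ) ((2 * j : ℕ) + 1) := ⟨-(j ^ 2 + j), 2 * j + 1, by push_cast; ring⟩
  obtain ⟨z, hz⟩ := hcop.dvd_of_dvd_mul_left h4
  refine ⟨z, ?_⟩
  rw [← Efun_abs, ← habs, he, hz]
  push_cast
  ring
end

section
/- For integers n ≥ 1 and k, every nonnegative integer x with 0 ≤ x < 2^{n-1} satisfies E_{2^n+1}(2^n·k + 2x + 1) ≡ k(k+1)/2 (mod 4). -/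
open Finset Polynomial

section Stmt13Aux

lemma prod_sub_eq_smeval (c : ℤ) : ∀ r : ℕ,
    (∏ j ∈ Finset.range r, (c - (j : ℤ))) = (descPochhammer ℤ r).smeval c
  | 0 => by simp [descPochhammer_zero, Polynomial.smeval_one]
  | r + 1 => by
    rw [Finset.prod_range_succ, prod_sub_eq_smeval c r, descPochhammer_succ_right,
      Polynomial.smeval_mul, Polynomial.smeval_sub, Polynomial.smeval_X,
      Polynomial.smeval_natCast]
    simp

lemma prod_sub_eq_choose (c : ℤ) (r : ℕ) :
    (∏ j ∈ Finset.range r, (c - (j : ℤ))) = (r.factorial : ℤ) * Ring.choose c r := by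
  rw [prod_sub_eq_smeval, Ring.descPochhammer_eq_factorial_smul_choose, nsmul_eq_mul]

lemma prod_range_double (f : ℕ → ℤ) : ∀ b : ℕ,
    ∏ i ∈ Finset.range (2 * b), f i = ∏ j ∈ Finset.range b, (f (2 * j) * f (2 * j + 1))
  | 0 => by simp
  | b + 1 => by
    have h : 2 * (b + 1) = (2 * b) + 1 + 1 := by ring
    rw [h, Finset.prod_range_succ, Finset.prod_range_succ, prod_range_double f b,
      Finset.prod_range_succ, mul_assoc]

lemma prod_sub_reflect (c : ℤ) (r : ℕ) :
    (∏ j ∈ Finset.range r, (c - (j : ℤ))) = ∏ j ∈ Finset.range r, (c - r + 1 + (j : ℤ)) := by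
  induction r generalizing c with
  | zero => simp
  | succ r ih =>
    rw [Finset.prod_range_succ', Finset.prod_range_succ]
    have h1 : ∏ j ∈ Finset.range r, (c - ((j : ℤ) + 1)) = ∏ j ∈ Finset.range r, ((c - 1) - (j:ℤ)) := by
      apply Finset.prod_congr rfl; intro j _; ring
    push_cast
    rw [h1, ih (c - 1)]
    have h2 : ∏ j ∈ Finset.range r, ((c - 1) - (r:ℤ) + 1 + (j:ℤ))
        = ∏ j ∈ Finset.range r, (c - ((r:ℤ)+1) + 1 + (j:ℤ)) := by
      apply Finset.prod_congr rfl; intro j _; ring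
    rw [h2]
    ring

lemma odd_prod_reflect : ∀ r : ℕ,
    (∏ t ∈ Finset.range r, (2 * (t : ℤ) + 1)) = ∏ t ∈ Finset.range r, ((2 * r - 1 : ℤ) - 2 * t)
  | 0 => by simp
  | r + 1 => by
    rw [Finset.prod_range_succ, Finset.prod_range_succ', odd_prod_reflect r]
    have h : ∏ t ∈ Finset.range r, ((2 * ((r:ℤ) + 1) - 1) - 2 * ((t:ℤ) + 1))
        = ∏ t ∈ Finset.range r, ((2 * r - 1 : ℤ) - 2 * t) := by
      apply Finset.prod_congr rfl; intro t _; ring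
    push_cast
    rw [h]
    ring

lemma odd_sq (c : ℤ) (hc : Odd c) : ((c : ZMod 4)) ^ 2 = 1 := by
  obtain ⟨j, rfl⟩ := hc
  push_cast
  have h4 : (4 : ZMod 4) = 0 := by decide
  linear_combination ((j : ZMod 4) ^ 2 + j) * h4

lemma odd_pair (c : ℤ) (hc : Odd c) : (c : ZMod 4) * ((c : ZMod 4) - 2) = 3 := by
  obtain ⟨j, rfl⟩ := hc
  push_cast
  have h4 : (4 : ZMod 4) = 0 := by decide
  linear_combination ((j : ZMod 4) ^ 2 - 1) * h4

lemma odd_window (c : ℤ) (hc : Odd c) : ∀ b : ℕ,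
    ((∏ t ∈ Finset.range (2 * b), (c - 2 * (t : ℤ)) : ℤ) : ZMod 4) = 3 ^ b
  | 0 => by simp
  | b + 1 => by
    have h : 2 * (b + 1) = 2 * b + 1 + 1 := by ring
    rw [h, Finset.prod_range_succ, Finset.prod_range_succ, Int.cast_mul, Int.cast_mul,
      odd_window c hc b]
    have h4 : (4 : ZMod 4) = 0 := by decide
    have hp : (((c - 2 * ((2 * b : ℕ) : ℤ)) : ℤ) : ZMod 4)
        * (((c - 2 * ((2 * b + 1 : ℕ) : ℤ)) : ℤ) : ZMod 4) = 3 := by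
      push_cast
      linear_combination odd_pair c hc +
        (-2 * (b : ZMod 4) * (c : ZMod 4) + 4 * (b : ZMod 4) ^ 2 + 2 * (b : ZMod 4)) * h4
    rw [mul_assoc, hp, pow_succ]

lemma fact_split : ∀ M : ℕ, ((2 * M).factorial : ℤ)
    = 2 ^ M * (M.factorial : ℤ) * ∏ t ∈ Finset.range M, (2 * (t : ℤ) + 1)
  | 0 => by simp
  | M + 1 => by
    have h : 2 * (M + 1) = 2 * M + 1 + 1 := by ring
    rw [h, Nat.factorial_succ, Nat.factorial_succ, Nat.factorial_succ, Finset.prod_range_succ]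
    push_cast
    rw [fact_split M]
    push_cast
    ring

lemma halving (b : ℕ) (hb : Even b) (h : ℤ) (ρ : ℕ) (hρ : ρ ≤ 1) :
    ((Ring.choose (2 * h + ρ) (2 * b) : ℤ) : ZMod 4) = ((Ring.choose h b : ℤ) : ZMod 4) := by
  obtain ⟨b', hb'⟩ := hb
  have hb2 : b = 2 * b' := by omega
  subst hb2
  have e2 : (∏ i ∈ Finset.range (2 * (2 * b')), ((2 * h + ρ) - (i : ℤ)))
      = 2 ^ (2 * b') * (∏ j ∈ Finset.range (2 * b'), (h - (j : ℤ)))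
        * ∏ j ∈ Finset.range (2 * b'), ((2 * h + 2 * ρ - 1 : ℤ) - 2 * j) := by
    rw [prod_range_double (fun i => (2 * h + ρ) - (i : ℤ))]
    have : ∀ j ∈ Finset.range (2 * b'),
        ((2 * h + ρ) - ((2 * j : ℕ) : ℤ)) * ((2 * h + ρ) - ((2 * j + 1 : ℕ) : ℤ))
        = 2 * ((h - (j:ℤ)) * ((2 * h + 2 * ρ - 1 : ℤ) - 2 * j)) := by
      intro j _
      interval_cases ρ <;> push_cast <;> ring
    rw [Finset.prod_congr rfl this, Finset.prod_mul_distrib, Finset.prod_mul_distrib,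
      Finset.prod_const, Finset.card_range]
    ring
  have f1 := prod_sub_eq_choose (2 * h + ρ) (2 * (2 * b'))
  have f2 := prod_sub_eq_choose h (2 * b')
  have f3 := fact_split (2 * b')
  rw [f3] at f1
  rw [f2] at e2
  rw [f1] at e2
  have hne : ((2:ℤ) ^ (2 * b') * ((2 * b').factorial : ℤ)) ≠ 0 := by positivity
  have e4 : (∏ t ∈ Finset.range (2 * b'), (2 * (t:ℤ) + 1)) * Ring.choose (2 * h + ρ) (2 * (2 * b'))
      = Ring.choose h (2 * b') * ∏ j ∈ Finset.range (2 * b'), ((2 * h + 2 * ρ - 1 : ℤ) - 2 * j) := by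
    apply mul_left_cancel₀ hne
    linear_combination e2
  have e5 := congrArg (fun z : ℤ => (z : ZMod 4)) e4
  simp only [Int.cast_mul] at e5
  have w1 : ((∏ t ∈ Finset.range (2 * b'), (2 * (t:ℤ) + 1) : ℤ) : ZMod 4) = 3 ^ b' := by
    rw [odd_prod_reflect]
    have : Odd (2 * ((2 * b' : ℕ) : ℤ) - 1) := ⟨2 * b' - 1, by push_cast; ring⟩
    exact odd_window _ this b'
  have w2 : ((∏ j ∈ Finset.range (2 * b'), ((2 * h + 2 * ρ - 1 : ℤ) - 2 * j) : ℤ) : ZMod 4)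
      = 3 ^ b' := by
    have : Odd (2 * h + 2 * (ρ:ℤ) - 1) := ⟨h + ρ - 1, by ring⟩
    exact odd_window _ this b'
  rw [w1, w2] at e5
  have h9 : (3 : ZMod 4) ^ b' * (3 : ZMod 4) ^ b' = 1 := by
    have h32 : (3 : ZMod 4) ^ 2 = 1 := by decide
    rw [← pow_add, show b' + b' = 2 * b' by ring, pow_mul, h32, one_pow]
  calc ((Ring.choose (2 * h + ρ) (2 * (2 * b')) : ℤ) : ZMod 4)
      = (3 ^ b' * 3 ^ b') * ((Ring.choose (2 * h + ρ) (2 * (2 * b')) : ℤ) : ZMod 4) := by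
        rw [h9, one_mul]
    _ = 3 ^ b' * (3 ^ b' * ((Ring.choose (2 * h + ρ) (2 * (2 * b')) : ℤ) : ZMod 4)) := by ring
    _ = 3 ^ b' * (((Ring.choose h (2 * b') : ℤ) : ZMod 4) * 3 ^ b') := by rw [e5]
    _ = (3 ^ b' * 3 ^ b') * ((Ring.choose h (2 * b') : ℤ) : ZMod 4) := by ring
    _ = ((Ring.choose h (2 * b') : ℤ) : ZMod 4) := by rw [h9, one_mul]

lemma chain : ∀ (n : ℕ) (K : ℤ) (x : ℕ), x < 2 ^ n →
    ((Ring.choose (2 ^ n * K + x) (2 ^ (n + 1)) : ℤ) : ZMod 4)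
      = ((Ring.choose K 2 : ℤ) : ZMod 4)
  | 0, K, x, hx => by
    interval_cases x
    norm_num
  | n + 1, K, x, hx => by
    have hb : Even ((2:ℕ) ^ (n + 1)) := ⟨2 ^ n, by ring⟩
    have h1 := halving (2 ^ (n + 1)) hb (2 ^ n * K + ((x / 2 : ℕ) : ℤ)) (x % 2)
      (by omega)
    have harg : 2 * (2 ^ n * K + ((x / 2 : ℕ) : ℤ)) + ((x % 2 : ℕ) : ℤ)
        = 2 ^ (n + 1) * K + (x : ℤ) := by
      have hxx : ((x : ℤ)) = 2 * ((x / 2 : ℕ) : ℤ) + ((x % 2 : ℕ) : ℤ) := by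
        exact_mod_cast (Nat.div_add_mod x 2).symm
      rw [hxx]
      ring
    rw [harg, show 2 * 2 ^ (n + 1) = 2 ^ (n + 2) by ring] at h1
    rw [h1]
    exact chain n K (x / 2) (by
      have h2 : (2:ℕ) ^ (n + 1) = 2 * 2 ^ n := by ring
      omega)

lemma prod_sq_split (y : ℤ) : ∀ M : ℕ,
    (∏ ℓ ∈ Finset.range (M + 1), (y ^ 2 - (ℓ : ℤ) ^ 2))
      = y * ∏ j ∈ Finset.range (2 * M + 1), (y + (M : ℤ) - (j : ℤ))
  | 0 => by simp; ring
  | M + 1 => by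
    have h2 : ∏ j ∈ Finset.range (2 * (M + 1) + 1), (y + ((M + 1 : ℕ) : ℤ) - (j : ℤ))
        = (∏ j ∈ Finset.range (2 * M + 1), (y + (M : ℤ) - (j : ℤ)))
            * (y - (M : ℤ) - 1) * (y + (M : ℤ) + 1) := by
      rw [show 2 * (M + 1) + 1 = (2 * M + 1) + 1 + 1 by ring, Finset.prod_range_succ',
        Finset.prod_range_succ]
      push_cast
      have h1 : ∏ x ∈ Finset.range (2 * M + 1), (y + ((M : ℤ) + 1) - ((x : ℤ) + 1))
          = ∏ x ∈ Finset.range (2 * M + 1), (y + (M : ℤ) - (x : ℤ)) :=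
        Finset.prod_congr rfl (fun x _ => by ring)
      rw [h1]
      ring
    rw [Finset.prod_range_succ, prod_sq_split y M, h2]
    push_cast
    ring

lemma L9 : ∀ n' : ℕ, (((2 * ((2:ℤ) ^ n') + 1) : ℤ) : ZMod 4) * 3 ^ ((2:ℕ) ^ n') = 1
  | 0 => by decide
  | s + 1 => by
    have h4 : (4 : ZMod 4) = 0 := by decide
    have h3 : (3 : ZMod 4) ^ ((2:ℕ) ^ (s + 1)) = 1 := by
      rw [show (2:ℕ) ^ (s+1) = 2 * 2 ^ s by ring, pow_mul,
        show (3 : ZMod 4) ^ 2 = 1 by decide, one_pow]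
    rw [h3, mul_one]
    push_cast
    linear_combination ((2:ZMod 4) ^ s) * h4

end Stmt13Aux

/-- For `n ≥ 1`, `k ∈ ℤ` and `0 ≤ x < 2^{n-1}`:
`E_{2^n+1}(2^n·k + 2x + 1) ≡ k(k+1)/2 (mod 4)`. -/
theorem stmt13 : ∀ n : ℕ, 1 ≤ n → ∀ k : ℤ, ∀ x : ℕ, x < 2 ^ (n - 1) →
    ∃ z : ℤ, Efun (2 ^ n + 1) (((2 ^ n * k + 2 * (x : ℤ) + 1 : ℤ) : ℚ)) =
      4 * z + ((k : ℚ) * ((k : ℚ) + 1)) / 2 := by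
  intro n hn k x hx
  obtain ⟨n', rfl⟩ : ∃ n', n = n' + 1 := ⟨n - 1, by omega⟩
  simp only [Nat.add_sub_cancel] at hx
  set B : ℕ := 2 ^ n' with hB
  have hBpow : (2:ℕ) ^ (n' + 1) = 2 * B := by rw [hB, pow_succ]; ring
  have hBZ : (2:ℤ) ^ (n' + 1) = 2 * (B:ℤ) := by exact_mod_cast hBpow
  set y : ℤ := 2 ^ (n' + 1) * k + 2 * (x:ℤ) + 1 with hy
  set w : ℤ := (B:ℤ) * k + (x:ℤ) with hw
  have hyw : y = 2 * w + 1 := by rw [hy, hw, hBZ]; ring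
  set P : ℤ := ∏ ℓ ∈ Finset.range (2 * B + 1), (y ^ 2 - (ℓ:ℤ) ^ 2) with hP
  set e : ℤ := Ring.choose (y + ((2 * B + 1 : ℕ) : ℤ)) (2 * (2 * B + 1))
      + Ring.choose (y + ((2 * B + 1 : ℕ) : ℤ) - 1) (2 * (2 * B + 1)) with he
  set C : ℤ := Ring.choose (w + (B:ℤ)) (2 * B) with hC
  set O : ℤ := ∏ s ∈ Finset.range B, (y ^ 2 - (2 * (s:ℤ) + 2) ^ 2) with hO
  set Dd : ℤ := (2 * (B:ℤ) + 1) * ∏ t ∈ Finset.range (2 * B + 1), (2 * (t:ℤ) + 1) with hD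
  -- P2 : product of 2m-1 consecutive integers
  have hP2 : P = y * ∏ j ∈ Finset.range (2 * (2 * B) + 1), (y + ((2 * B : ℕ):ℤ) - (j:ℤ)) := by
    rw [hP]
    exact prod_sq_split y (2 * B)
  -- Step A
  have a1 := prod_sub_eq_choose (y + ((2 * B + 1 : ℕ) : ℤ)) (2 * (2 * B + 1))
  have a2 := prod_sub_eq_choose (y + ((2 * B + 1 : ℕ) : ℤ) - 1) (2 * (2 * B + 1))
  have a3 : ∏ j ∈ Finset.range (2 * (2 * B + 1)), ((y + ((2 * B + 1 : ℕ) : ℤ)) - (j:ℤ))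
      = (∏ j ∈ Finset.range (2 * (2 * B) + 1), (y + ((2 * B : ℕ):ℤ) - (j:ℤ)))
        * (y + ((2 * B + 1 : ℕ) : ℤ)) := by
    rw [show 2 * (2 * B + 1) = (2 * (2 * B) + 1) + 1 by ring, Finset.prod_range_succ']
    congr 1
    · apply Finset.prod_congr rfl; intro j _; push_cast; ring
    · push_cast; ring
  have a4 : ∏ j ∈ Finset.range (2 * (2 * B + 1)), ((y + ((2 * B + 1 : ℕ) : ℤ) - 1) - (j:ℤ))
      = (∏ j ∈ Finset.range (2 * (2 * B) + 1), (y + ((2 * B : ℕ):ℤ) - (j:ℤ)))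
        * (y - ((2 * B + 1 : ℕ) : ℤ)) := by
    rw [show 2 * (2 * B + 1) = (2 * (2 * B) + 1) + 1 by ring, Finset.prod_range_succ]
    congr 1
    · apply Finset.prod_congr rfl; intro j _; push_cast; ring
    · push_cast; ring
  have stepA : (((2 * (2 * B + 1)).factorial : ℤ)) * e = 2 * P := by
    rw [he, hP2]
    linear_combination (-1 : ℤ) * a1 + a3 + (-1 : ℤ) * a2 + a4
  -- Step B : P decomposition
  have b1 : P = (∏ ℓ ∈ Finset.range (2 * B), (y ^ 2 - ((ℓ:ℤ) + 1) ^ 2)) * y ^ 2 := by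
    rw [hP, Finset.prod_range_succ']
    push_cast
    ring
  have b2 : ∏ ℓ ∈ Finset.range (2 * B), (y ^ 2 - ((ℓ:ℤ) + 1) ^ 2)
      = (∏ s ∈ Finset.range B, (y ^ 2 - (2 * (s:ℤ) + 1) ^ 2)) * O := by
    rw [prod_range_double (fun ℓ => y ^ 2 - ((ℓ:ℤ) + 1) ^ 2) B, hO, ← Finset.prod_mul_distrib]
    apply Finset.prod_congr rfl; intro s _; push_cast; ring
  have b4 : ∏ s ∈ Finset.range B, (y ^ 2 - (2 * (s:ℤ) + 1) ^ 2)
      = (4:ℤ) ^ B * ((∏ s ∈ Finset.range B, (w - (s:ℤ)))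
        * (∏ s ∈ Finset.range B, (w + (s:ℤ) + 1))) := by
    have hterm : ∀ s ∈ Finset.range B, y ^ 2 - (2 * (s:ℤ) + 1) ^ 2
        = 4 * ((w - (s:ℤ)) * (w + (s:ℤ) + 1)) := by
      intro s _; rw [hyw]; ring
    rw [Finset.prod_congr rfl hterm, Finset.prod_mul_distrib, Finset.prod_const,
      Finset.card_range, Finset.prod_mul_distrib]
  have b5 : ∏ j ∈ Finset.range (2 * B), ((w + (B:ℤ)) - (j:ℤ))
      = (∏ s ∈ Finset.range B, (w + (s:ℤ) + 1)) * (∏ s ∈ Finset.range B, (w - (s:ℤ))) := by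
    rw [show 2 * B = B + B by ring, Finset.prod_range_add]
    congr 1
    · rw [prod_sub_reflect (w + (B:ℤ)) B]
      apply Finset.prod_congr rfl; intro s _; push_cast; ring
    · apply Finset.prod_congr rfl; intro j _; push_cast; ring
  have b6 : ∏ j ∈ Finset.range (2 * B), ((w + (B:ℤ)) - (j:ℤ))
      = (((2 * B).factorial : ℤ)) * C := by
    rw [hC]; exact prod_sub_eq_choose (w + (B:ℤ)) (2 * B)
  have b7 : (∏ s ∈ Finset.range B, (w - (s:ℤ))) * (∏ s ∈ Finset.range B, (w + (s:ℤ) + 1))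
      = (((2 * B).factorial : ℤ)) * C := by
    rw [← b6, b5]; ring
  have P_eq : P = y ^ 2 * ((4:ℤ) ^ B * (((2 * B).factorial : ℤ)) * C) * O := by
    rw [b1, b2, b4, b7]; ring
  -- Step C : e * Dd = y^2 * O * C
  have hfne : (((2 * (2 * B + 1)).factorial : ℤ)) ≠ 0 := by positivity
  have stepC : e * Dd = y ^ 2 * O * C := by
    apply mul_left_cancel₀ hfne
    have fs := fact_split (2 * B + 1)
    have hfq : (((2 * B + 1).factorial : ℤ)) = (2 * (B:ℤ) + 1) * (((2 * B).factorial : ℤ)) := by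
      have := Nat.factorial_succ (2 * B)
      push_cast [this]
      ring
    have h4B : (4:ℤ) ^ B = 2 ^ (2 * B) := by
      rw [show (4:ℤ) = 2 ^ 2 by norm_num, ← pow_mul]
    calc (((2 * (2 * B + 1)).factorial : ℤ)) * (e * Dd)
        = ((((2 * (2 * B + 1)).factorial : ℤ)) * e) * Dd := by ring
      _ = (2 * P) * Dd := by rw [stepA]
      _ = (((2 * (2 * B + 1)).factorial : ℤ)) * (y ^ 2 * O * C) := by
          rw [P_eq, hD, fs, hfq, h4B]; ring
  -- Step D : cast to ZMod 4
  have hyodd : Odd y := ⟨w, by linarith [hyw]⟩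
  have cast1 := congrArg (fun z : ℤ => (z : ZMod 4)) stepC
  simp only [Int.cast_mul, Int.cast_pow] at cast1
  have hDcast : ((Dd : ℤ) : ZMod 4) = 1 := by
    rw [hD, Int.cast_mul, Finset.prod_range_succ, Int.cast_mul]
    have w1 : ((∏ t ∈ Finset.range (2 * B), (2 * (t:ℤ) + 1) : ℤ) : ZMod 4) = 3 ^ B := by
      rw [odd_prod_reflect]
      have : Odd (2 * ((2 * B : ℕ) : ℤ) - 1) := ⟨2 * ((B:ℕ):ℤ) - 1, by push_cast; ring⟩
      exact odd_window _ this B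
    have w2 : (((2 * ((2 * B : ℕ) : ℤ) + 1) : ℤ) : ZMod 4) = 1 := by
      push_cast
      have h4 : (4 : ZMod 4) = 0 := by decide
      linear_combination ((B : ZMod 4)) * h4
    rw [w1, w2, mul_one]
    have := L9 n'
    rw [hB]
    push_cast
    push_cast at this
    linear_combination this
  have hOcast : ((O : ℤ) : ZMod 4) = 1 := by
    rw [hO, Int.cast_prod]
    apply Finset.prod_eq_one
    intro s _
    push_cast
    have hy2 := odd_sq y hyodd
    have h4 : (4 : ZMod 4) = 0 := by decide
    linear_combination hy2 - ((s : ZMod 4) + 1) ^ 2 * h4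
  have hy2c : ((y : ℤ) : ZMod 4) ^ 2 = 1 := odd_sq y hyodd
  rw [hDcast, hOcast, hy2c] at cast1
  simp only [one_mul, mul_one] at cast1
  -- cast1 : (e : ZMod 4) = (C : ZMod 4)
  -- Step E
  have stepE : ((C : ℤ) : ZMod 4) = ((Ring.choose ((k:ℤ) + 1) 2 : ℤ) : ZMod 4) := by
    rw [hC, show w + (B:ℤ) = 2 ^ n' * (k + 1) + (x:ℤ) by
        rw [hw, hB]; push_cast; ring,
      show 2 * B = 2 ^ (n' + 1) by rw [hBpow]]
    exact chain n' (k + 1) x hx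
  -- Step F
  have hdvd : (4:ℤ) ∣ (e - Ring.choose ((k:ℤ) + 1) 2) := by
    have hz0 : ((e - Ring.choose ((k:ℤ) + 1) 2 : ℤ) : ZMod 4) = 0 := by
      rw [Int.cast_sub, cast1, stepE, sub_self]
    exact (ZMod.intCast_zmod_eq_zero_iff_dvd _ 4).mp hz0
  obtain ⟨z, hz⟩ := hdvd
  refine ⟨z, ?_⟩
  -- value of Ring.choose (k+1) 2
  have hT : 2 * Ring.choose ((k:ℤ) + 1) 2 = ((k:ℤ) + 1) * k := by
    have h2 := prod_sub_eq_choose ((k:ℤ) + 1) 2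
    rw [Finset.prod_range_succ, Finset.prod_range_succ, Finset.prod_range_zero] at h2
    norm_num at h2
    linarith
  -- final ℚ computation
  have hmEq : (2:ℕ) ^ (n' + 1) + 1 = 2 * B + 1 := by rw [hBpow]
  rw [Efun, hmEq]
  have hPQ : ∏ ℓ ∈ Finset.range (2 * B + 1),
      ((((2 ^ (n' + 1) * k + 2 * (x:ℤ) + 1 : ℤ)) : ℚ) ^ 2 - (ℓ:ℚ) ^ 2) = ((P : ℤ) : ℚ) := by
    rw [hP, Int.cast_prod]
    apply Finset.prod_congr rfl
    intro ℓ _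
    rw [hy]
    push_cast
    ring
  rw [hPQ]
  have stepAQ : (2:ℚ) * ((P : ℤ) : ℚ) = (((2 * (2 * B + 1)).factorial : ℚ)) * ((e : ℤ) : ℚ) := by
    have := congrArg (fun z : ℤ => (z : ℚ)) stepA
    push_cast at this ⊢
    linarith
  have hfneQ : (((2 * (2 * B + 1)).factorial : ℚ)) ≠ 0 := by positivity
  have heQ : ((e : ℤ) : ℚ) = 4 * z + ((Ring.choose ((k:ℤ) + 1) 2 : ℤ) : ℚ) := by
    have : e = 4 * z + Ring.choose ((k:ℤ) + 1) 2 := by linarith [hz]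
    exact_mod_cast congrArg (fun t : ℤ => (t : ℚ)) this
  have hTQ : ((Ring.choose ((k:ℤ) + 1) 2 : ℤ) : ℚ) = ((k:ℚ) * ((k:ℚ) + 1)) / 2 := by
    have := congrArg (fun t : ℤ => (t : ℚ)) hT
    push_cast at this
    field_simp
    linarith
  calc (2:ℚ) / (((2 * (2 * B + 1)).factorial : ℚ)) * ((P : ℤ) : ℚ)
      = ((e : ℤ) : ℚ) := by
        rw [div_mul_eq_mul_div, div_eq_iff hfneQ]
        linarith [stepAQ]
    _ = 4 * z + ((k:ℚ) * ((k:ℚ) + 1)) / 2 := by rw [heQ, hTQ]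
end

section
/- For λ = (m−2)/2 with m even, m ≥ 2, and for all positive reals s, t, one has (∂_s − (s/t)∂_t)^λ cos(t) = √(π/2) · Σ_{ℓ=0}^{⌊λ/2⌋} s^{λ−2ℓ} · (1/(2^ℓ ℓ!)) · (Γ(λ+1)/Γ(λ+1−2ℓ)) · J_{λ−1/2−ℓ}(t)/t^{λ−1/2−ℓ}. -/
/-
Write `g_ν(t) = J_ν(t) / t^ν`. The power series of `J_ν` gives
`g_ν(t) = 2^(-ν) ∑ₙ (-1)ⁿ (t²/4)ⁿ / (n! Γ(n + ν + 1))`; differentiating term by term yields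
`g_ν' = -t g_{ν+1}`, and comparing with the Taylor series of `cos` yields `cos = √(π/2) g_{-1/2}`.
Hence `D = ∂_s − (s/t)∂_t` acts by `D(s^a g_ν(t)) = a s^(a-1) g_ν(t) + s^(a+1) g_{ν+1}(t)`, and by
induction `D^λ cos = √(π/2) ∑_ℓ p(λ, ℓ) s^(λ-2ℓ) g_{λ-1/2-ℓ}`, where
`p(λ+1, ℓ+1) = p(λ, ℓ+1) + (λ - 2ℓ) p(λ, ℓ)`. This is the recurrence for the number of ways to
choose `ℓ` disjoint pairs among `λ` points, `C(λ, 2ℓ) (2ℓ-1)‼ = λ! / (2^ℓ ℓ! (λ-2ℓ)!)`.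
-/

/-- The Bessel function of the first kind of order `ν`. -/
noncomputable def besselJ (ν t : ℝ) : ℝ :=
  ∑' n : ℕ, ((-1 : ℝ) ^ n / ((Nat.factorial n : ℝ) * Real.Gamma ((n : ℝ) + ν + 1))) *
    (t / 2) ^ ((2 * (n : ℝ)) + ν)

/-- The first-order differential operator `∂_s − (s/t)∂_t` on functions of `(s,t)`. -/
noncomputable def dop (f : ℝ → ℝ → ℝ) : ℝ → ℝ → ℝ :=
  fun s t => deriv (fun u => f u t) s - (s / t) * deriv (fun u => f s u) t

open Real Finset
open scoped Nat

noncomputable section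

def besselCoeff (ν : ℝ) (n : ℕ) : ℝ :=
  (-1) ^ n / (n ! * Gamma (n + ν + 1) * 4 ^ n)

def besselSeries (ν x : ℝ) : ℝ :=
  ∑' n, besselCoeff ν n * x ^ n

lemma Gamma_mul_factorial_le_two_pow_mul_Gamma {ν : ℝ} (hν : -(1 / 2) ≤ ν) (n : ℕ) :
    Gamma (ν + 1) * n ! ≤ 2 ^ n * Gamma (n + ν + 1) := by
  induction n with
  | zero => simp
  | succ n ih =>
    have hpos : 0 < (n : ℝ) + ν + 1 := by linarith [n.cast_nonneg (α := ℝ)]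
    have hΓ : 0 ≤ Gamma (ν + 1) * n ! :=
      mul_nonneg (Gamma_pos_of_pos (by linarith)).le (Nat.cast_nonneg _)
    calc Gamma (ν + 1) * (n + 1)! = (n + 1) * (Gamma (ν + 1) * n !) := by
          push_cast [Nat.factorial_succ]; ring
      _ ≤ (2 * ((n : ℝ) + ν + 1)) * (2 ^ n * Gamma (n + ν + 1)) := by
          gcongr; linarith
      _ = 2 ^ (n + 1) * Gamma (↑(n + 1) + ν + 1) := by
          rw [show ((n + 1 : ℕ) : ℝ) + ν + 1 = (n + ν + 1) + 1 by push_cast; ring,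
            Gamma_add_one hpos.ne']
          ring

lemma abs_besselCoeff_le {ν : ℝ} (hν : -(1 / 2) ≤ ν) (n : ℕ) :
    |besselCoeff ν n| ≤ 1 / (Gamma (ν + 1) * n ! * 2 ^ n) := by
  have hΓ : 0 < Gamma (ν + 1) := Gamma_pos_of_pos (by linarith)
  have hΓn : 0 < Gamma (n + ν + 1) := Gamma_pos_of_pos (by linarith [n.cast_nonneg (α := ℝ)])
  have hn : (1 : ℝ) ≤ n ! := mod_cast Nat.one_le_iff_ne_zero.mpr n.factorial_ne_zero
  rw [besselCoeff, abs_div, abs_pow, abs_neg, abs_one, one_pow, abs_of_pos (by positivity)]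
  refine one_div_le_one_div_of_le (by positivity) ?_
  calc Gamma (ν + 1) * n ! * 2 ^ n ≤ 2 ^ n * Gamma (n + ν + 1) * 2 ^ n := by
        gcongr ?_ * _; exact Gamma_mul_factorial_le_two_pow_mul_Gamma hν n
    _ = 1 * Gamma (n + ν + 1) * 4 ^ n := by
        rw [show (4 : ℝ) = 2 * 2 by norm_num, mul_pow]; ring
    _ ≤ n ! * Gamma (n + ν + 1) * 4 ^ n := by gcongr

lemma summable_abs_besselCoeff_mul_mul_pow {ν : ℝ} (hν : -(1 / 2) ≤ ν) {R : ℝ} (hR : 0 ≤ R) :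
    Summable fun n : ℕ => |besselCoeff ν n| * n * R ^ n := by
  refine .of_nonneg_of_le (fun n => by positivity) (fun n => ?_)
    ((summable_pow_div_factorial R).mul_left (Gamma (ν + 1))⁻¹)
  have hn : (n : ℝ) ≤ 2 ^ n := mod_cast Nat.lt_two_pow_self.le
  calc |besselCoeff ν n| * n * R ^ n
      ≤ 1 / (Gamma (ν + 1) * n ! * 2 ^ n) * 2 ^ n * R ^ n := by
        gcongr
        · exact (abs_nonneg _).trans (abs_besselCoeff_le hν n)
        · exact abs_besselCoeff_le hν n
    _ = (Gamma (ν + 1))⁻¹ * (R ^ n / n !) := by field_simp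

lemma besselCoeff_succ_mul (ν : ℝ) (n : ℕ) :
    besselCoeff ν (n + 1) * (n + 1) = -besselCoeff (ν + 1) n / 4 := by
  rw [besselCoeff, besselCoeff, show ((n + 1 : ℕ) : ℝ) + ν + 1 = n + (ν + 1) + 1 by push_cast; ring]
  rcases eq_or_ne (Gamma (n + (ν + 1) + 1)) 0 with h | h
  · simp [h]
  · push_cast [Nat.factorial_succ]
    field_simp
    ring

lemma tsum_besselCoeff_mul_deriv_pow (ν x : ℝ)
    (hsum : Summable fun n : ℕ => besselCoeff ν n * (n * x ^ (n - 1))) :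
    ∑' n : ℕ, besselCoeff ν n * (n * x ^ (n - 1)) = -besselSeries (ν + 1) x / 4 := by
  rw [hsum.tsum_eq_zero_add, besselSeries, neg_div, ← tsum_div_const, ← tsum_neg]
  simp only [Nat.cast_zero, zero_mul, mul_zero, zero_add, Nat.add_sub_cancel]
  refine tsum_congr fun n => ?_
  rw [← mul_assoc, Nat.cast_succ, besselCoeff_succ_mul]
  ring

lemma hasDerivAt_besselSeries {ν : ℝ} (hν : -(1 / 2) ≤ ν) (x : ℝ) :
    HasDerivAt (besselSeries ν) (-besselSeries (ν + 1) x / 4) x := by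
  set R := |x| + 1
  have hR : 1 ≤ R := le_add_of_nonneg_left (abs_nonneg x)
  have hbound : ∀ n : ℕ, ∀ y ∈ Set.Ioo (-R) R,
      ‖besselCoeff ν n * (n * y ^ (n - 1))‖ ≤ |besselCoeff ν n| * n * R ^ n := by
    intro n y hy
    rw [Real.norm_eq_abs, abs_mul, abs_mul, abs_pow, Nat.abs_cast, ← mul_assoc]
    gcongr
    calc |y| ^ (n - 1) ≤ R ^ (n - 1) := by gcongr; exact abs_le.mpr ⟨hy.1.le, hy.2.le⟩
      _ ≤ R ^ n := pow_le_pow_right₀ hR (Nat.sub_le n 1)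
  have hx : x ∈ Set.Ioo (-R) R := by
    constructor <;> linarith [neg_abs_le x, le_abs_self x]
  have hsum := summable_abs_besselCoeff_mul_mul_pow hν (zero_le_one.trans hR)
  rw [← tsum_besselCoeff_mul_deriv_pow ν x (.of_norm_bounded hsum (hbound · x hx))]
  refine hasDerivAt_tsum_of_isPreconnected hsum isOpen_Ioo isPreconnected_Ioo
    (fun n y _ => (hasDerivAt_pow n y).const_mul _) hbound (y₀ := 0) ?_ ?_ hx
  · constructor <;> linarith
  · refine summable_of_ne_finset_zero (s := {0}) fun n hn => ?_
    simp [zero_pow (Finset.notMem_singleton.mp hn)]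

def besselJDivRpow (ν t : ℝ) : ℝ :=
  besselJ ν t / t ^ ν

lemma besselJDivRpow_eq_besselSeries (ν : ℝ) {t : ℝ} (ht : 0 < t) :
    besselJDivRpow ν t = besselSeries ν (t ^ 2) / 2 ^ ν := by
  have hJ : besselJ ν t = t ^ ν / 2 ^ ν * besselSeries ν (t ^ 2) := by
    rw [besselJ, besselSeries, ← tsum_mul_left]
    refine tsum_congr fun n => ?_
    rw [rpow_add (by positivity), show 2 * (n : ℝ) = ((2 * n : ℕ) : ℝ) by push_cast; ring,
      rpow_natCast, div_rpow ht.le zero_le_two, besselCoeff, pow_mul, div_pow, div_pow]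
    field_simp
    norm_num
  rw [besselJDivRpow, hJ]
  field_simp [(rpow_pos_of_pos ht ν).ne']

lemma hasDerivAt_besselJDivRpow {ν : ℝ} (hν : -(1 / 2) ≤ ν) {t : ℝ} (ht : 0 < t) :
    HasDerivAt (besselJDivRpow ν) (-t * besselJDivRpow (ν + 1) t) t := by
  have hseries : HasDerivAt (fun u => besselSeries ν (u ^ 2) / 2 ^ ν)
      (-besselSeries (ν + 1) (t ^ 2) / 4 * (2 * t) / 2 ^ ν) t := by
    simpa using ((hasDerivAt_besselSeries hν (t ^ 2)).comp t (hasDerivAt_pow 2 t)).div_const _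
  have heq : besselJDivRpow ν =ᶠ[nhds t] fun u => besselSeries ν (u ^ 2) / 2 ^ ν :=
    Filter.eventually_of_mem (Ioi_mem_nhds ht) fun u hu => besselJDivRpow_eq_besselSeries ν hu
  refine (hseries.congr_of_eventuallyEq heq).congr_deriv ?_
  rw [besselJDivRpow_eq_besselSeries _ ht, rpow_add zero_lt_two, rpow_one]
  field_simp
  ring

lemma Nat.factorial_two_mul (n : ℕ) : (2 * n)! = 2 ^ n * n ! * (2 * n - 1)‼ := by
  cases n with
  | zero => rfl
  | succ n =>
    rw [show 2 * (n + 1) = 2 * n + 1 + 1 by ring, Nat.factorial_eq_mul_doubleFactorial,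
      show 2 * n + 1 + 1 = 2 * (n + 1) by ring, Nat.doubleFactorial_two_mul]
    rfl

lemma cos_eq_besselJDivRpow {t : ℝ} (ht : 0 < t) :
    cos t = √(π / 2) * besselJDivRpow (-(1 / 2)) t := by
  have hconst : √(π / 2) / 2 ^ (-(1 / 2) : ℝ) = √π := by
    rw [rpow_neg zero_le_two, ← sqrt_eq_rpow, div_inv_eq_mul,
      ← sqrt_mul (div_nonneg pi_pos.le zero_le_two), div_mul_cancel₀ _ two_ne_zero]
  rw [besselJDivRpow_eq_besselSeries _ ht, mul_div_assoc', mul_div_right_comm, hconst,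
    besselSeries, ← tsum_mul_left, cos_eq_tsum]
  refine tsum_congr fun n => ?_
  rw [besselCoeff, show (n : ℝ) + -(1 / 2) + 1 = n + 1 / 2 by ring, Gamma_nat_add_half,
    Nat.factorial_two_mul, ← pow_mul]
  push_cast
  field_simp
  rw [← pow_mul, mul_comm, pow_mul]
  norm_num

def pairingCount (n k : ℕ) : ℕ :=
  n.choose (2 * k) * (2 * k - 1)‼

@[simp]
lemma pairingCount_zero_right (n : ℕ) : pairingCount n 0 = 1 := by
  simp [pairingCount]

lemma pairingCount_eq_zero_of_lt {n k : ℕ} (h : n < 2 * k) : pairingCount n k = 0 := by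
  rw [pairingCount, Nat.choose_eq_zero_of_lt h, zero_mul]

lemma pairingCount_succ_succ (n k : ℕ) :
    pairingCount (n + 1) (k + 1) = pairingCount n (k + 1) + (n - 2 * k) * pairingCount n k := by
  have hodd : (2 * (k + 1) - 1)‼ = (2 * k + 1) * (2 * k - 1)‼ := by
    rw [show 2 * (k + 1) - 1 = 2 * k + 1 by omega, Nat.doubleFactorial_add_one]
  rw [pairingCount, pairingCount, pairingCount, hodd, show 2 * (k + 1) = 2 * k + 1 + 1 by ring,
    Nat.choose_succ_succ', add_mul, ← mul_assoc (n.choose _), Nat.choose_succ_right_eq]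
  ring

lemma sum_range_pairingCount_succ_smul {M : Type*} [AddCommMonoid M] (n : ℕ) (f : ℕ → M) :
    ∑ k ∈ range (n + 2), pairingCount (n + 1) k • f k =
      ∑ k ∈ range (n + 1), pairingCount n k • ((n - 2 * k) • f (k + 1) + f k) := by
  have htop : ∑ k ∈ range (n + 1), pairingCount n (k + 1) • f (k + 1) =
      ∑ k ∈ range n, pairingCount n (k + 1) • f (k + 1) := by
    rw [sum_range_succ, pairingCount_eq_zero_of_lt (by omega), zero_smul, add_zero]
  simp only [sum_range_succ' _ (n + 1), pairingCount_succ_succ, add_smul, sum_add_distrib, smul_add,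
    smul_smul, pairingCount_zero_right, htop, sum_range_succ' (fun k => pairingCount n k • f k)]
  simp only [mul_comm (n - 2 * _), one_smul]
  abel

lemma pairingCount_eq_Gamma_div {n k : ℕ} (h : 2 * k ≤ n) :
    (pairingCount n k : ℝ) = 1 / (2 ^ k * k !) * (Gamma (n + 1) / Gamma (n + 1 - 2 * k)) := by
  have hnat : pairingCount n k * (2 ^ k * k ! * (n - 2 * k)!) = n ! := by
    rw [← Nat.choose_mul_factorial_mul_factorial h, Nat.factorial_two_mul, pairingCount]
    ring
  rw [show (n : ℝ) + 1 - 2 * k = (n - 2 * k : ℕ) + 1 by push_cast [h]; ring,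
    Gamma_nat_eq_factorial, Gamma_nat_eq_factorial, ← hnat]
  push_cast
  field_simp

def besselTerm (n k : ℕ) (s t : ℝ) : ℝ :=
  s ^ (n - 2 * k) * besselJDivRpow (n - 1 / 2 - k) t

def besselSum (n : ℕ) (s t : ℝ) : ℝ :=
  √(π / 2) * ∑ k ∈ range (n + 1), pairingCount n k * besselTerm n k s t

lemma hasDerivAt_besselTerm_fst (n k : ℕ) (s t : ℝ) :
    HasDerivAt (fun u => besselTerm n k u t)
      ((n - 2 * k : ℕ) * besselTerm (n + 1) (k + 1) s t) s := by
  have hν : ((n + 1 : ℕ) : ℝ) - 1 / 2 - (k + 1 : ℕ) = n - 1 / 2 - k := by push_cast; ring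
  rw [besselTerm, hν, show n + 1 - 2 * (k + 1) = n - 2 * k - 1 by omega, ← mul_assoc]
  exact (hasDerivAt_pow _ s).mul_const _

lemma hasDerivAt_besselTerm_snd {n k : ℕ} (h : k ≤ n) (s : ℝ) {t : ℝ} (ht : 0 < t) :
    HasDerivAt (besselTerm n k s)
      (-t * (s ^ (n - 2 * k) * besselJDivRpow ((n + 1 : ℕ) - 1 / 2 - k) t)) t := by
  have hν : -(1 / 2) ≤ (n : ℝ) - 1 / 2 - k := by
    have : (k : ℝ) ≤ n := mod_cast h
    linarith
  have hν' : ((n + 1 : ℕ) : ℝ) - 1 / 2 - k = n - 1 / 2 - k + 1 := by push_cast; ring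
  rw [hν', mul_left_comm]
  exact (hasDerivAt_besselJDivRpow hν ht).const_mul _

lemma mul_pow_mul_besselJDivRpow {n k : ℕ} (h : 2 * k ≤ n) (s t : ℝ) :
    s * (s ^ (n - 2 * k) * besselJDivRpow ((n + 1 : ℕ) - 1 / 2 - k) t) =
      besselTerm (n + 1) k s t := by
  rw [besselTerm, show n + 1 - 2 * k = n - 2 * k + 1 by omega, pow_succ]
  ring

lemma dop_eq_of_hasDerivAt {F : ℝ → ℝ → ℝ} {s t a b : ℝ}
    (ha : HasDerivAt (fun u => F u t) a s) (hb : HasDerivAt (F s) b t) :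
    dop F s t = a - s / t * b := by
  rw [dop, ha.deriv, hb.deriv]

lemma dop_congr {F G : ℝ → ℝ → ℝ} (h : ∀ u v, 0 < v → F u v = G u v) (s : ℝ) {t : ℝ}
    (ht : 0 < t) : dop F s t = dop G s t := by
  have hs : (fun u => F u t) = fun u => G u t := funext fun u => h u t ht
  have hnear : F s =ᶠ[nhds t] G s :=
    Filter.eventually_of_mem (Ioi_mem_nhds ht) fun v hv => h s v hv
  rw [dop, dop, hs, hnear.deriv_eq]

lemma dop_besselSum (n : ℕ) (s : ℝ) {t : ℝ} (ht : 0 < t) :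
    dop (besselSum n) s t = besselSum (n + 1) s t := by
  have hs : HasDerivAt (fun u => besselSum n u t) (√(π / 2) * ∑ k ∈ range (n + 1),
      pairingCount n k * ((n - 2 * k : ℕ) * besselTerm (n + 1) (k + 1) s t)) s :=
    (HasDerivAt.fun_sum fun k _ =>
      (hasDerivAt_besselTerm_fst n k s t).const_mul _).const_mul _
  have ht' : HasDerivAt (besselSum n s) (√(π / 2) * ∑ k ∈ range (n + 1), pairingCount n k *
      (-t * (s ^ (n - 2 * k) * besselJDivRpow ((n + 1 : ℕ) - 1 / 2 - k) t))) t :=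
    (HasDerivAt.fun_sum fun k hk => (hasDerivAt_besselTerm_snd
      (Nat.lt_succ_iff.mp (mem_range.mp hk)) s ht).const_mul _).const_mul _
  have hrec := sum_range_pairingCount_succ_smul n fun k => besselTerm (n + 1) k s t
  simp only [nsmul_eq_mul] at hrec
  rw [dop_eq_of_hasDerivAt hs ht', besselSum, hrec, mul_left_comm, ← mul_sub, mul_sum,
    ← sum_sub_distrib]
  congr 1
  refine sum_congr rfl fun k _ => ?_
  rcases le_or_gt (2 * k) n with h | h
  · rw [← mul_pow_mul_besselJDivRpow h]
    field_simp
    ring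
  · simp [pairingCount_eq_zero_of_lt h]

lemma iterate_dop_cos_eq_besselSum (n : ℕ) :
    ∀ s t, 0 < t → dop^[n] (fun _ v => cos v) s t = besselSum n s t := by
  induction n with
  | zero =>
    intro s t ht
    simp [besselSum, besselTerm, cos_eq_besselJDivRpow ht]
  | succ n ih =>
    intro s t ht
    rw [Function.iterate_succ_apply', dop_congr ih s ht, dop_besselSum n s ht]

end

theorem stmt18_general (lam : ℕ) (s t : ℝ) (ht : 0 < t) :
    (dop^[lam] (fun _ u => Real.cos u)) s t =
      Real.sqrt (Real.pi / 2) * ∑ ℓ ∈ Finset.range (lam / 2 + 1),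
        s ^ (lam - 2 * ℓ) * (1 / ((2 : ℝ) ^ ℓ * (Nat.factorial ℓ : ℝ))) *
          (Real.Gamma ((lam : ℝ) + 1) / Real.Gamma ((lam : ℝ) + 1 - 2 * ℓ)) *
          (besselJ ((lam : ℝ) - 1/2 - ℓ) t / t ^ ((lam : ℝ) - 1/2 - ℓ)) := by
  rw [iterate_dop_cos_eq_besselSum lam s t ht, besselSum,
    ← sum_subset (range_subset_range.mpr (by omega : lam / 2 + 1 ≤ lam + 1))]
  · congr 1
    refine sum_congr rfl fun ℓ hℓ => ?_
    rw [pairingCount_eq_Gamma_div (by have := mem_range.mp hℓ; omega), besselTerm,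
      besselJDivRpow]
    ring
  · intro ℓ _ hℓ
    rw [pairingCount_eq_zero_of_lt (by have := mem_range.not.mp hℓ; omega), Nat.cast_zero,
      zero_mul]

/-- For `λ = (m−2)/2` with `m` even, `m ≥ 2`, and `s, t > 0`:
`(∂_s − (s/t)∂_t)^λ cos(t) = √(π/2)·Σ_{ℓ=0}^{⌊λ/2⌋} s^{λ−2ℓ}·(1/(2^ℓ ℓ!))·
(Γ(λ+1)/Γ(λ+1−2ℓ))·J_{λ−1/2−ℓ}(t)/t^{λ−1/2−ℓ}`. -/
theorem stmt18 (m : ℕ) (hm : Even m) (hm2 : 2 ≤ m) (lam : ℕ) (hlam : m = 2 * lam + 2)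
    (s t : ℝ) (hs : 0 < s) (ht : 0 < t) :
    (dop^[lam] (fun _ u => Real.cos u)) s t =
      Real.sqrt (Real.pi / 2) * ∑ ℓ ∈ Finset.range (lam / 2 + 1),
        s ^ (lam - 2 * ℓ) * (1 / ((2 : ℝ) ^ ℓ * (Nat.factorial ℓ : ℝ))) *
          (Real.Gamma ((lam : ℝ) + 1) / Real.Gamma ((lam : ℝ) + 1 - 2 * ℓ)) *
          (besselJ ((lam : ℝ) - 1/2 - ℓ) t / t ^ ((lam : ℝ) - 1/2 - ℓ)) :=
  stmt18_general lam s t ht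
end
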